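/- arXiv:2212.12041 — 2 statements merged into one kernel-verified Lean document; each statement's English description precedes it below -/
import Mathlib

section
/- Let Y ∈ ℝⁿ, and let the design matrix be partitioned as [W X] with W ∈ ℝ^{n×q}, X ∈ ℝ^{n×d}, and [W X] of full column rank. The ordinary least squares coefficient of X in the regression of Y on [W X] equals (XᵀMX)^{-1}XᵀMY, where M = I - W(WᵀW)^{-1}Wᵀ (Frisch–Waugh–Lovell theorem). -/
/-!
Solving the normal equations `DᵀD β = DᵀY` of the partitioned design `D = [W X]` by block
Gaussian elimination, i.e. eliminating the `W`-coefficients, leaves the system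
`(XᵀMX) β_X = XᵀMY` in the Schur complement `XᵀMX` of `WᵀW` in `DᵀD`. Full column rank makes
`DᵀD` positive definite, hence both its principal block `WᵀW` and its Schur complement
`XᵀMX` are invertible, and `β_X = (XᵀMX)⁻¹XᵀMY`.
-/

open Matrix

namespace Matrix

theorem mulVec_injective_of_rank_eq_card {K m n : Type*} [Field K] [Fintype n]
    {A : Matrix m n K} (h : A.rank = Fintype.card n) : Function.Injective A.mulVec := by
  rw [mulVec_injective_iff, linearIndependent_iff_card_eq_finrank_span, ← h,
    rank_eq_finrank_span_cols, Set.finrank]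

theorem posDef_transpose_mul_self_of_injective {m n : Type*} [Fintype m] [Fintype n]
    {A : Matrix m n ℝ} (hA : Function.Injective A.mulVec) : (Aᵀ * A).PosDef := by
  simpa [conjTranspose_eq_transpose_of_trivial] using PosDef.conjTranspose_mul_self A hA

theorem transpose_fromCols_mul_fromCols {R m n p : Type*} [CommSemiring R] [Fintype m]
    (A : Matrix m n R) (B : Matrix m p R) :
    (fromCols A B)ᵀ * fromCols A B = fromBlocks (Aᵀ * A) (Aᵀ * B) (Bᵀ * A) (Bᵀ * B) := by
  rw [transpose_fromCols, fromRows_mul_fromCols]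

theorem schur_mulVec_eq_of_fromBlocks_mulVec_eq {R n p : Type*} [CommRing R] [Fintype n]
    [Fintype p] [DecidableEq n] {A : Matrix n n R} {B : Matrix n p R} {C : Matrix p n R}
    {D : Matrix p p R} (hA : IsUnit A.det) {x u : n → R} {y v : p → R}
    (h : fromBlocks A B C D *ᵥ Sum.elim x y = Sum.elim u v) :
    (D - C * A⁻¹ * B) *ᵥ y = v - (C * A⁻¹) *ᵥ u := by
  rw [fromBlocks_mulVec, Sum.elim_comp_inl, Sum.elim_comp_inr] at h
  have hu : A *ᵥ x + B *ᵥ y = u := funext fun i => congrFun h (Sum.inl i)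
  have hv : C *ᵥ x + D *ᵥ y = v := funext fun i => congrFun h (Sum.inr i)
  have hCx : (C * A⁻¹) *ᵥ (A *ᵥ x) = C *ᵥ x := by
    rw [mulVec_mulVec, Matrix.mul_assoc, nonsing_inv_mul A hA, Matrix.mul_one]
  rw [← hv, ← hu, sub_mulVec, mulVec_add, hCx, ← mulVec_mulVec y (C * A⁻¹) B]
  abel

end Matrix

section ResidualMaker

variable {R m p r : Type*} [CommRing R] [Fintype m] [Fintype p] [DecidableEq m] [DecidableEq p]

noncomputable def residualMaker (W : Matrix m p R) : Matrix m m R :=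
  1 - W * (Wᵀ * W)⁻¹ * Wᵀ

theorem transpose_mul_residualMaker_mul (W : Matrix m p R) (X : Matrix m r R) :
    Xᵀ * residualMaker W * X = Xᵀ * X - Xᵀ * W * (Wᵀ * W)⁻¹ * (Wᵀ * X) := by
  simp only [residualMaker, Matrix.mul_sub, Matrix.sub_mul, Matrix.mul_one, Matrix.mul_assoc]

theorem transpose_mulVec_residualMaker_mulVec (W : Matrix m p R) (X : Matrix m r R)
    (Y : m → R) :
    Xᵀ *ᵥ (residualMaker W *ᵥ Y) = Xᵀ *ᵥ Y - (Xᵀ * W * (Wᵀ * W)⁻¹) *ᵥ (Wᵀ *ᵥ Y) := by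
  simp only [residualMaker, mulVec_mulVec, sub_mulVec, one_mulVec, mulVec_sub,
    Matrix.mul_assoc]

theorem isUnit_det_transpose_mul_residualMaker_mul [Fintype r] [DecidableEq r]
    {W : Matrix m p R} {X : Matrix m r R} (hW : IsUnit (Wᵀ * W).det)
    (hD : IsUnit ((fromCols W X)ᵀ * fromCols W X)) :
    IsUnit (Xᵀ * residualMaker W * X).det := by
  let _ := invertibleOfIsUnitDet _ hW
  rw [← isUnit_iff_isUnit_det, transpose_mul_residualMaker_mul, ← invOf_eq_nonsing_inv,
    ← isUnit_fromBlocks_iff_of_invertible₁₁, ← transpose_fromCols_mul_fromCols]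
  exact hD

theorem transpose_mul_residualMaker_mul_mulVec_of_normal_eq [Fintype r]
    {W : Matrix m p R} {X : Matrix m r R} {Y : m → R} {β : p ⊕ r → R}
    (hW : IsUnit (Wᵀ * W).det)
    (hβ : ((fromCols W X)ᵀ * fromCols W X) *ᵥ β = (fromCols W X)ᵀ *ᵥ Y) :
    (Xᵀ * residualMaker W * X) *ᵥ (β ∘ Sum.inr) = Xᵀ *ᵥ (residualMaker W *ᵥ Y) := by
  rw [transpose_fromCols_mul_fromCols, ← Sum.elim_comp_inl_inr β, transpose_fromCols,
    fromRows_mulVec] at hβ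
  rw [transpose_mul_residualMaker_mul, transpose_mulVec_residualMaker_mulVec]
  exact schur_mulVec_eq_of_fromBlocks_mulVec_eq hW hβ

end ResidualMaker

/-- Frisch–Waugh–Lovell: the OLS coefficient of `X` in the regression of `Y` on the
partitioned design `[W X]` equals `(XᵀMX)⁻¹ Xᵀ M Y`, where
`M = I - W(WᵀW)⁻¹Wᵀ`. -/
theorem frisch_waugh_lovell {n q d : ℕ} (Y : Fin n → ℝ)
    (W : Matrix (Fin n) (Fin q) ℝ) (X : Matrix (Fin n) (Fin d) ℝ)
    (hrank : (Matrix.fromCols W X).rank = q + d) :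
    let D := Matrix.fromCols W X
    let M := (1 : Matrix (Fin n) (Fin n) ℝ) - W * (Wᵀ * W)⁻¹ * Wᵀ
    ∀ j : Fin d,
      ((Dᵀ * D)⁻¹ *ᵥ (Dᵀ *ᵥ Y)) (Sum.inr j) =
      ((Xᵀ * M * X)⁻¹ *ᵥ (Xᵀ *ᵥ (M *ᵥ Y))) j := by
  intro D M j
  change _ = ((Xᵀ * residualMaker W * X)⁻¹ *ᵥ (Xᵀ *ᵥ (residualMaker W *ᵥ Y))) j
  have hD : Function.Injective D.mulVec := mulVec_injective_of_rank_eq_card (by simpa using hrank)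
  have hDD : (Dᵀ * D).PosDef := posDef_transpose_mul_self_of_injective hD
  have hWW : IsUnit (Wᵀ * W).det := by
    have hsub : (Dᵀ * D).submatrix Sum.inl Sum.inl = Wᵀ * W := by
      rw [transpose_fromCols_mul_fromCols]; rfl
    rw [← isUnit_iff_isUnit_det, ← hsub]
    exact (hDD.submatrix Sum.inl_injective).isUnit
  set β := (Dᵀ * D)⁻¹ *ᵥ (Dᵀ *ᵥ Y)
  have hβ : (Dᵀ * D) *ᵥ β = Dᵀ *ᵥ Y := by
    rw [mulVec_mulVec, mul_nonsing_inv _ ((isUnit_iff_isUnit_det _).mp hDD.isUnit), one_mulVec]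
  have hS := isUnit_det_transpose_mul_residualMaker_mul hWW hDD.isUnit
  rw [← transpose_mul_residualMaker_mul_mulVec_of_normal_eq hWW hβ, mulVec_mulVec,
    nonsing_inv_mul _ hS, one_mulVec]
  rfl
end

section
/- In the Frisch–Waugh–Lovell decomposition, the OLS coefficient of W in the regression of Y on [W X] equals (WᵀW)^{-1}Wᵀ(Y - X β_x), where β_x = (XᵀMX)^{-1}XᵀMY and M = I - W(WᵀW)^{-1}Wᵀ. -/
open Matrix

/-!
The OLS coefficient `(DᵀD)⁻¹DᵀY` of an injective design `D` is the unique solution `β` of the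
normal equations `Dᵀ(Y - Dβ) = 0`. For `D = [W X]`, `βw = (WᵀW)⁻¹Wᵀ(Y - Xβx)` leaves the residual
`Y - Wβw - Xβx = M(Y - Xβx)`, which is orthogonal to `W` because `MW = 0`, and orthogonal to `X`
exactly when `XᵀMXβx = XᵀMY`. Injectivity of `[W X]` makes `MX` injective, so `XᵀMX = (MX)ᵀ(MX)`
is invertible and the `βx` of the statement solves that equation.
-/

namespace Matrix

variable {R : Type*} {m k l : Type*} [Fintype k] [Fintype l]

section Field

variable [Field R]

theorem mulVec_injective_iff_rank_eq_card (A : Matrix m k R) :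
    Function.Injective A.mulVec ↔ A.rank = Fintype.card k := by
  rw [mulVec_injective_iff, linearIndependent_iff_card_eq_finrank_span,
    rank_eq_finrank_span_cols, eq_comm, Set.finrank]

theorem mulVec_injective_of_fromCols {A : Matrix m k R} {B : Matrix m l R}
    (h : Function.Injective (fromCols A B).mulVec) : Function.Injective A.mulVec := by
  intro u v huv
  have := @h (Sum.elim u 0) (Sum.elim v 0) (by simp [huv])
  exact funext fun i ↦ congrFun this (Sum.inl i)

theorem eq_zero_of_mulVec_eq_of_fromCols {A : Matrix m k R} {B : Matrix m l R}
    (h : Function.Injective (fromCols A B).mulVec) {u : k → R} {w : l → R}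
    (huw : A *ᵥ u = B *ᵥ w) : w = 0 := by
  have := @h (Sum.elim (-u) w) 0 (by simp [mulVec_neg, huw])
  exact funext fun j ↦ congrFun this (Sum.inr j)

end Field

variable [Fintype m] [DecidableEq k]

section CommRing

variable [CommRing R]

noncomputable def olsCoef (A : Matrix m k R) (Y : m → R) : k → R := (Aᵀ * A)⁻¹ *ᵥ (Aᵀ *ᵥ Y)

variable [DecidableEq m]

noncomputable def residualMaker (W : Matrix m k R) : Matrix m m R := 1 - W * (Wᵀ * W)⁻¹ * Wᵀ

theorem residualMaker_mulVec (W : Matrix m k R) (Y : m → R) :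
    residualMaker W *ᵥ Y = Y - W *ᵥ olsCoef W Y := by
  simp only [residualMaker, olsCoef, sub_mulVec, one_mulVec, mulVec_mulVec, Matrix.mul_assoc]

theorem transpose_residualMaker (W : Matrix m k R) : (residualMaker W)ᵀ = residualMaker W := by
  simp only [residualMaker, transpose_sub, transpose_one, transpose_mul, transpose_transpose,
    transpose_nonsing_inv, Matrix.mul_assoc]

theorem transpose_mulVec_residualMaker_mulVec_sub_eq_zero [DecidableEq l] (W : Matrix m k R)
    {X : Matrix m l R} (hX : IsUnit (Xᵀ * residualMaker W * X).det) (Y : m → R) :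
    Xᵀ *ᵥ (residualMaker W *ᵥ
      (Y - X *ᵥ ((Xᵀ * residualMaker W * X)⁻¹ *ᵥ (Xᵀ *ᵥ (residualMaker W *ᵥ Y))))) = 0 := by
  rw [mulVec_sub, mulVec_sub, mulVec_mulVec, mulVec_mulVec, mulVec_mulVec,
    mulVec_mulVec _ (Xᵀ * residualMaker W * X), mul_nonsing_inv _ hX, one_mulVec, sub_self]

variable {W : Matrix m k R} (hW : IsUnit (Wᵀ * W).det)
include hW

theorem residualMaker_mul : residualMaker W * W = 0 := by
  rw [residualMaker, Matrix.sub_mul, Matrix.one_mul, Matrix.mul_assoc _ Wᵀ,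
    Matrix.mul_assoc W, nonsing_inv_mul _ hW, Matrix.mul_one, sub_self]

theorem transpose_mul_residualMaker : Wᵀ * residualMaker W = 0 := by
  rw [← transpose_residualMaker, ← transpose_mul, residualMaker_mul hW, transpose_zero]

theorem residualMaker_mul_self : residualMaker W * residualMaker W = residualMaker W := by
  conv_lhs => arg 2; rw [residualMaker]
  rw [Matrix.mul_sub, Matrix.mul_one, ← Matrix.mul_assoc, ← Matrix.mul_assoc,
    residualMaker_mul hW, Matrix.zero_mul, Matrix.zero_mul, sub_zero]

end CommRing

theorem mulVec_injective_residualMaker_mul [Field R] [DecidableEq m] {W : Matrix m k R}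
    {X : Matrix m l R} (hD : Function.Injective (fromCols W X).mulVec) :
    Function.Injective (residualMaker W * X).mulVec := by
  rw [← coe_mulVecLin, injective_iff_map_eq_zero]
  intro w hw
  refine eq_zero_of_mulVec_eq_of_fromCols hD (u := olsCoef W (X *ᵥ w)) ?_
  rw [mulVecLin_apply, ← mulVec_mulVec, residualMaker_mulVec, sub_eq_zero] at hw
  exact hw.symm

variable [Field R] [LinearOrder R] [IsStrictOrderedRing R]

theorem isUnit_transpose_mul_self_iff (A : Matrix m k R) :
    IsUnit (Aᵀ * A) ↔ Function.Injective A.mulVec := by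
  rw [← mulVec_injective_iff_isUnit, ← coe_mulVecLin, ← LinearMap.ker_eq_bot,
    ker_mulVecLin_transpose_mul_self, LinearMap.ker_eq_bot, coe_mulVecLin]

theorem isUnit_det_transpose_mul_self {A : Matrix m k R} (hA : Function.Injective A.mulVec) :
    IsUnit (Aᵀ * A).det :=
  (isUnit_iff_isUnit_det _).mp ((isUnit_transpose_mul_self_iff A).mpr hA)

theorem olsCoef_eq_of_normal_eq {A : Matrix m k R} (hA : Function.Injective A.mulVec)
    {Y : m → R} {β : k → R} (hnormal : Aᵀ *ᵥ (Y - A *ᵥ β) = 0) : olsCoef A Y = β := by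
  rw [mulVec_sub, mulVec_mulVec, sub_eq_zero] at hnormal
  rw [olsCoef, hnormal, mulVec_mulVec, nonsing_inv_mul _ (isUnit_det_transpose_mul_self hA),
    one_mulVec]

variable [DecidableEq m] [DecidableEq l] {W : Matrix m k R} {X : Matrix m l R}

theorem isUnit_transpose_mul_residualMaker_mul (hD : Function.Injective (fromCols W X).mulVec) :
    IsUnit (Xᵀ * residualMaker W * X) := by
  have hW := isUnit_det_transpose_mul_self (mulVec_injective_of_fromCols hD)
  have hsquare : Xᵀ * residualMaker W * X = (residualMaker W * X)ᵀ * (residualMaker W * X) := by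
    rw [transpose_mul, transpose_residualMaker, Matrix.mul_assoc, Matrix.mul_assoc,
      ← Matrix.mul_assoc (residualMaker W), residualMaker_mul_self hW]
  rw [hsquare, isUnit_transpose_mul_self_iff]
  exact mulVec_injective_residualMaker_mul hD

theorem olsCoef_fromCols (hD : Function.Injective (fromCols W X).mulVec) {Y : m → R}
    {βx : l → R} (hβx : Xᵀ *ᵥ (residualMaker W *ᵥ (Y - X *ᵥ βx)) = 0) :
    olsCoef (fromCols W X) Y = Sum.elim (olsCoef W (Y - X *ᵥ βx)) βx := by
  have hW := isUnit_det_transpose_mul_self (mulVec_injective_of_fromCols hD)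
  have hresidual : Y - fromCols W X *ᵥ Sum.elim (olsCoef W (Y - X *ᵥ βx)) βx =
      residualMaker W *ᵥ (Y - X *ᵥ βx) := by
    rw [fromCols_mulVec_sumElim, residualMaker_mulVec]
    abel
  refine olsCoef_eq_of_normal_eq hD ?_
  rw [hresidual, transpose_fromCols, fromRows_mulVec, hβx, mulVec_mulVec,
    transpose_mul_residualMaker hW, zero_mulVec, Sum.elim_zero_zero]

end Matrix

/-- Frisch–Waugh–Lovell: the OLS coefficient of `W` in the regression of `Y` on the
partitioned design `[W X]` equals `(WᵀW)⁻¹ Wᵀ (Y - X βₓ)`, where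
`βₓ = (XᵀMX)⁻¹ Xᵀ M Y` and `M = I - W(WᵀW)⁻¹Wᵀ`. -/
theorem frisch_waugh_lovell_w {n q d : ℕ} (Y : Fin n → ℝ)
    (W : Matrix (Fin n) (Fin q) ℝ) (X : Matrix (Fin n) (Fin d) ℝ)
    (hrank : (Matrix.fromCols W X).rank = q + d) :
    let D := Matrix.fromCols W X
    let M := (1 : Matrix (Fin n) (Fin n) ℝ) - W * (Wᵀ * W)⁻¹ * Wᵀ
    let βx := (Xᵀ * M * X)⁻¹ *ᵥ (Xᵀ *ᵥ (M *ᵥ Y))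
    ∀ i : Fin q,
      ((Dᵀ * D)⁻¹ *ᵥ (Dᵀ *ᵥ Y)) (Sum.inl i) =
      ((Wᵀ * W)⁻¹ *ᵥ (Wᵀ *ᵥ (Y - X *ᵥ βx))) i := by
  intro D M βx i
  have hD : Function.Injective D.mulVec :=
    (mulVec_injective_iff_rank_eq_card D).mpr (by simpa using hrank)
  have hXMX := (isUnit_iff_isUnit_det _).mp (isUnit_transpose_mul_residualMaker_mul hD)
  -- `M` is `residualMaker W` and both sides are `olsCoef` vectors, definitionally.
  exact congrFun
    (olsCoef_fromCols hD (transpose_mulVec_residualMaker_mulVec_sub_eq_zero W hXMX Y)) (Sum.inl i)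
end
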